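/- Let m ≥ 1, let M, N ⊆ [m] with M ≠ ∅ and N ⊊ [m], and let D = aΔ_M + cΔ_N^c ⊆ E^m. Then the linear left-E-code C^L_D has length |D| = 2^{|M|}(2^m−2^{|N|}) and size |C^L_D| = 2^{2|M|}, and the multiset {wt_Lee(c^L_D(v)) : v ∈ E^m} (with multiplicity over all 2^{2m} elements v ∈ E^m) consists of: 2^{|M|}(2^m−2^{|N|}) with multiplicity 2^{2m}−2^{2m−|M|+1}+2^{2m−2|M|}; 2^{|M|−1}(2^m−2^{|N|}) with multiplicity 2^{2m−|M|+1}−2^{2m−2|M|+1}; and 0 with multiplicity 2^{2m−2|M|}. -/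

import Mathlib

open Finset

/-- The simplicial complex `Δ_M ⊆ 𝔽₂^m` generated by `M ⊆ [m]`:
all vectors whose support is contained in `M`. -/
def deltaC {m : ℕ} (M : Finset (Fin m)) : Finset (Fin m → ZMod 2) :=
  Finset.univ.filter (fun w => ∀ i, w i ≠ 0 → i ∈ M)

/-- Dot product over `𝔽₂`. -/
def dotp {m : ℕ} (x y : Fin m → ZMod 2) : ZMod 2 := ∑ i, x i * y i

/-- The Gray map on a single element `a·s + c·t ↔ (s, t)` of `E = 𝔽₂ × 𝔽₂`:
`Φ(as + ct) = (t, s + t)`. -/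
def grayPair (e : ZMod 2 × ZMod 2) : Fin 2 → ZMod 2 := ![e.2, e.1 + e.2]

/-- The left codeword `c^L_D(v)` for `v = aα + cβ ↔ (α, β)`:
its coordinate at `d = (t₁, t₂) ∈ D` is `a(α·t₁) + c(β·t₁) ↔ (α·t₁, β·t₁)`. -/
def cwL {m : ℕ} (Ds : Finset ((Fin m → ZMod 2) × (Fin m → ZMod 2)))
    (v : (Fin m → ZMod 2) × (Fin m → ZMod 2)) :
    {d // d ∈ Ds} → ZMod 2 × ZMod 2 :=
  fun d => (dotp v.1 d.1.1, dotp v.2 d.1.1)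

/-- The Gray image `Φ(c^L_D(v)) ∈ 𝔽₂^{2|D|}` of the left codeword `c^L_D(v)`;
its Hamming weight (`hammingNorm`) is the Lee weight of `c^L_D(v)`. -/
def gcwL {m : ℕ} (Ds : Finset ((Fin m → ZMod 2) × (Fin m → ZMod 2)))
    (v : (Fin m → ZMod 2) × (Fin m → ZMod 2)) :
    {d // d ∈ Ds} × Fin 2 → ZMod 2 :=
  fun x => grayPair (cwL Ds v x.1) x.2

/-- The right codeword `c^R_D(v)` for `v = aα + cβ ↔ (α, β)`:
its coordinate at `d = (t₁, t₂) ∈ D` is `a(t₁·α) + c(t₂·α) ↔ (t₁·α, t₂·α)`. -/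
def cwR {m : ℕ} (Ds : Finset ((Fin m → ZMod 2) × (Fin m → ZMod 2)))
    (v : (Fin m → ZMod 2) × (Fin m → ZMod 2)) :
    {d // d ∈ Ds} → ZMod 2 × ZMod 2 :=
  fun d => (dotp d.1.1 v.1, dotp d.1.2 v.1)

/-- The Gray image `Φ(c^R_D(v)) ∈ 𝔽₂^{2|D|}` of the right codeword `c^R_D(v)`;
its Hamming weight (`hammingNorm`) is the Lee weight of `c^R_D(v)`. -/
def gcwR {m : ℕ} (Ds : Finset ((Fin m → ZMod 2) × (Fin m → ZMod 2)))
    (v : (Fin m → ZMod 2) × (Fin m → ZMod 2)) :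
    {d // d ∈ Ds} × Fin 2 → ZMod 2 :=
  fun x => grayPair (cwR Ds v x.1) x.2

/-! For `v = (α, β)` the coordinate of `c^L_D(v)` at `(t₁, t₂)` only depends on `t₁ ∈ Δ_M`, and its
Gray image has weight `[β·t₁ ≠ 0] + [(α + β)·t₁ ≠ 0]`. So the Lee weight is
`|Δ_N^c| (w(β) + w(α + β))`, where `w(γ)` counts the `t ∈ Δ_M` with `γ·t ≠ 0`. As `Δ_M` is closed
under addition, translating by a `t₀ ∈ Δ_M` with `γ·t₀ = 1` swaps the two classes, so `w(γ)` is
`2^{|M|-1}` unless `γ` vanishes on `M`, where it is `0`. The shear `(α, β) ↦ (α + β, β)` makes the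
two arguments independent, so the weight distribution is the square of the distribution of `w`.
Only the restrictions of `α` and `β` to `M` matter, and the unit vectors of `Δ_M` read them off,
which gives the size `2^{2|M|}`. -/

open Matrix

theorem Multiset.map_prodMap_product {α β γ δ : Type*} (f : α → γ) (g : β → δ)
    (s : Multiset α) (t : Multiset β) : (s ×ˢ t).map (Prod.map f g) = s.map f ×ˢ t.map g := by
  induction s using Multiset.induction_on with
  | empty => simp
  | cons a s ih => simp [Multiset.map_map, ih]

theorem Multiset.replicate_product_replicate {α β : Type*} (a b : ℕ) (x : α) (y : β) :
    Multiset.replicate a x ×ˢ Multiset.replicate b y = Multiset.replicate (a * b) (x, y) :=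
  Multiset.eq_replicate.2 ⟨by simp, fun p hp => by
    obtain ⟨h₁, h₂⟩ := Multiset.mem_product.1 hp
    exact Prod.ext (Multiset.eq_of_mem_replicate h₁) (Multiset.eq_of_mem_replicate h₂)⟩

theorem Multiset.map_univ_eq_replicate_add_replicate {α β : Type*} [Fintype α] [DecidableEq α]
    (S : Finset α) {f : α → β} {b c : β} (hS : ∀ x ∈ S, f x = b) (hSc : ∀ x ∉ S, f x = c) :
    univ.val.map f = Multiset.replicate #S b + Multiset.replicate #Sᶜ c := by
  have hsplit : univ.val = S.val + Sᶜ.val := by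
    rw [← Multiset.filter_add_not (· ∈ S) univ.val, ← filter_val, ← filter_val,
      filter_mem_eq_inter, univ_inter, compl_eq_univ_sdiff, ← filter_notMem_eq_sdiff]
  rw [hsplit, Multiset.map_add, Multiset.map_congr rfl hS, Multiset.map_const',
    Multiset.map_congr rfl fun x hx => hSc x (mem_compl.1 hx), Multiset.map_const', card_val,
    card_val]

theorem map_univ_shear {G β : Type*} [AddGroup G] [Fintype G] (f : G → G → β) :
    (univ : Finset (G × G)).val.map (fun v => f (v.1 + v.2) v.2) =
      (univ : Finset (G × G)).val.map fun v => f v.1 v.2 := by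
  let e : G × G ≃ G × G :=
    ⟨fun v => (v.1 + v.2, v.2), fun v => (v.1 - v.2, v.2), fun v => by simp, fun v => by simp⟩
  conv_rhs => rw [← Multiset.map_univ_val_equiv e, Multiset.map_map]
  rfl

theorem hammingNorm_prod {ι κ β : Type*} [Fintype ι] [Fintype κ] [Zero β] [DecidableEq β]
    (f : ι × κ → β) : hammingNorm f = ∑ i, hammingNorm fun j => f (i, j) := by
  simp only [hammingNorm, card_filter]
  exact Fintype.sum_prod_type _

theorem hammingNorm_grayPair (s t : ZMod 2) :
    hammingNorm (grayPair (s, t)) = (if t ≠ 0 then 1 else 0) + if s + t ≠ 0 then 1 else 0 := by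
  revert s t; decide

theorem two_pow_multiplicity_identities {k m : ℕ} (hkm : k ≤ m) :
    2 ^ (2 * m) + 2 ^ (2 * m - 2 * k) - 2 ^ (2 * m - k + 1) =
      (2 ^ m - 2 ^ (m - k)) * (2 ^ m - 2 ^ (m - k)) ∧
    2 ^ (2 * m - k + 1) - 2 ^ (2 * m - 2 * k + 1) = 2 * (2 ^ (m - k) * (2 ^ m - 2 ^ (m - k))) ∧
    2 ^ (2 * m - 2 * k) = 2 ^ (m - k) * 2 ^ (m - k) := by
  obtain ⟨j, rfl⟩ := Nat.exists_eq_add_of_le hkm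
  obtain ⟨c, hc⟩ := Nat.exists_eq_add_of_le (Nat.pow_le_pow_right two_pos (Nat.le_add_left j k))
  rw [show 2 * (k + j) - 2 * k = j + j by omega, show 2 * (k + j) - k + 1 = j + (k + j) + 1 by omega,
    show k + j - k = j by omega, two_mul, pow_succ, pow_succ, pow_add 2 j (k + j),
    pow_add 2 (k + j) (k + j), pow_add 2 j j, hc, Nat.add_sub_cancel_left]
  generalize 2 ^ j = x
  refine ⟨Nat.sub_eq_of_eq_add ?_, Nat.sub_eq_of_eq_add ?_, rfl⟩ <;> ring

section

variable {m : ℕ}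

theorem mem_deltaC {M : Finset (Fin m)} {w : Fin m → ZMod 2} :
    w ∈ deltaC M ↔ ∀ i ∉ M, w i = 0 := by
  simp only [deltaC, mem_filter, mem_univ, true_and]
  exact forall_congr' fun i => not_imp_comm

theorem deltaC_eq_piFinset (M : Finset (Fin m)) :
    deltaC M = Fintype.piFinset fun i => if i ∈ M then univ else {0} := by
  ext w
  simp only [mem_deltaC, Fintype.mem_piFinset]
  refine forall_congr' fun i => ?_
  split_ifs with hi <;> simp [hi]

theorem card_deltaC (M : Finset (Fin m)) : #(deltaC M) = 2 ^ #M := by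
  rw [deltaC_eq_piFinset, Fintype.card_piFinset]
  simp [apply_ite Finset.card, prod_ite_mem]

theorem dotp_eq_dotProduct (x y : Fin m → ZMod 2) : dotp x y = x ⬝ᵥ y := rfl

theorem add_mem_deltaC {M : Finset (Fin m)} {x y : Fin m → ZMod 2}
    (hx : x ∈ deltaC M) (hy : y ∈ deltaC M) : x + y ∈ deltaC M := by
  rw [mem_deltaC] at *
  intro i hi
  simp [hx i hi, hy i hi]

theorem single_mem_deltaC {M : Finset (Fin m)} {i : Fin m} (hi : i ∈ M) :
    Pi.single i 1 ∈ deltaC M :=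
  mem_deltaC.2 fun _ hj => Pi.single_eq_of_ne (ne_of_mem_of_not_mem hi hj).symm 1

theorem piecewise_mem_deltaC (M : Finset (Fin m)) (γ : Fin m → ZMod 2) :
    M.piecewise γ 0 ∈ deltaC M :=
  mem_deltaC.2 fun _ hi => M.piecewise_eq_of_notMem _ _ hi

theorem dotp_piecewise {M : Finset (Fin m)} {t : Fin m → ZMod 2} (ht : t ∈ deltaC M)
    (γ : Fin m → ZMod 2) : dotp (M.piecewise γ 0) t = dotp γ t := by
  refine sum_congr rfl fun i _ => ?_
  by_cases hi : i ∈ M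
  · rw [M.piecewise_eq_of_mem _ _ hi]
  · rw [mem_deltaC.1 ht i hi, mul_zero, mul_zero]

theorem dotp_eq_zero_of_mem_deltaC_compl {M : Finset (Fin m)} {γ t : Fin m → ZMod 2}
    (hγ : γ ∈ deltaC Mᶜ) (ht : t ∈ deltaC M) : dotp γ t = 0 := by
  refine sum_eq_zero fun i _ => ?_
  by_cases hi : i ∈ M
  · rw [mem_deltaC.1 hγ i (notMem_compl.2 hi), zero_mul]
  · rw [mem_deltaC.1 ht i hi, mul_zero]

theorem compl_deltaC_nonempty {N : Finset (Fin m)} (hN : N ≠ univ) : (deltaC N)ᶜ.Nonempty := by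
  obtain ⟨i, hi⟩ : ∃ i, i ∉ N := by simpa [eq_univ_iff_forall] using hN
  exact ⟨Pi.single i 1, mem_compl.2 fun h => by simpa using mem_deltaC.1 h i hi⟩

theorem two_mul_card_filter_dotp_ne_zero {S : Finset (Fin m → ZMod 2)}
    (hS : ∀ x ∈ S, ∀ y ∈ S, x + y ∈ S) {γ t₀ : Fin m → ZMod 2} (ht₀ : t₀ ∈ S)
    (hγ : dotp γ t₀ ≠ 0) : 2 * #{t ∈ S | dotp γ t ≠ 0} = #S := by
  have hflip (t) : dotp γ t ≠ 0 ↔ dotp γ (t + t₀) = 0 := by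
    have key : ∀ x y : ZMod 2, y ≠ 0 → (x ≠ 0 ↔ x + y = 0) := by decide
    rw [dotp_eq_dotProduct, dotp_eq_dotProduct, dotProduct_add]
    exact key _ _ hγ
  have hcancel (t : Fin m → ZMod 2) : t + t₀ + t₀ = t := by
    rw [add_assoc, ZModModule.add_self, add_zero]
  have hswap : #{t ∈ S | dotp γ t ≠ 0} = #{t ∈ S | ¬dotp γ t ≠ 0} := by
    refine card_nbij' (· + t₀) (· + t₀) ?_ ?_ (fun t _ => hcancel t) (fun t _ => hcancel t)
    · intro t ht
      simp only [mem_coe, mem_filter] at ht ⊢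
      exact ⟨hS _ ht.1 _ ht₀, not_not.2 ((hflip t).1 ht.2)⟩
    · intro t ht
      simp only [mem_coe, mem_filter] at ht ⊢
      exact ⟨hS _ ht.1 _ ht₀, (hflip _).2 (by simpa only [hcancel, not_not] using ht.2)⟩
  rw [two_mul]
  nth_rw 2 [hswap]
  exact card_filter_add_card_filter_not _

theorem card_filter_dotp_ne_zero_of_mem_compl {M : Finset (Fin m)} {γ : Fin m → ZMod 2}
    (hγ : γ ∈ deltaC Mᶜ) : #{t ∈ deltaC M | dotp γ t ≠ 0} = 0 := by
  rw [card_eq_zero, filter_eq_empty_iff]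
  exact fun t ht => not_not.2 (dotp_eq_zero_of_mem_deltaC_compl hγ ht)

theorem card_filter_dotp_ne_zero_of_notMem_compl {M : Finset (Fin m)} {γ : Fin m → ZMod 2}
    (hγ : γ ∉ deltaC Mᶜ) : #{t ∈ deltaC M | dotp γ t ≠ 0} = 2 ^ (#M - 1) := by
  obtain ⟨i, hiM, hγi⟩ : ∃ i ∈ M, γ i ≠ 0 := by
    simpa [mem_deltaC] using hγ
  have hdouble := two_mul_card_filter_dotp_ne_zero (fun _ hx _ hy => add_mem_deltaC hx hy)
    (single_mem_deltaC hiM) (by rwa [dotp_eq_dotProduct, dotProduct_single, mul_one])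
  rw [card_deltaC, ← Nat.two_pow_pred_mul_two (card_pos.2 ⟨i, hiM⟩)] at hdouble
  omega

theorem hammingNorm_gcwL_product (A B : Finset (Fin m → ZMod 2))
    (v : (Fin m → ZMod 2) × (Fin m → ZMod 2)) :
    hammingNorm (gcwL (A ×ˢ B) v) =
      #B * (#{t ∈ A | dotp v.2 t ≠ 0} + #{t ∈ A | dotp (v.1 + v.2) t ≠ 0}) := by
  let F (t : Fin m → ZMod 2) : ℕ :=
    (if dotp v.2 t ≠ 0 then 1 else 0) + if dotp (v.1 + v.2) t ≠ 0 then 1 else 0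
  have hcoord (d : {d // d ∈ A ×ˢ B}) :
      hammingNorm (fun j => gcwL (A ×ˢ B) v (d, j)) = F d.1.1 := by
    simp only [F, dotp_eq_dotProduct, add_dotProduct]
    exact hammingNorm_grayPair _ _
  rw [hammingNorm_prod, Fintype.sum_congr _ _ hcoord, sum_coe_sort (A ×ˢ B) (fun d => F d.1),
    sum_product]
  simp only [sum_const, smul_eq_mul, ← mul_sum, F, sum_add_distrib, card_filter]

theorem eq_of_mem_deltaC {M : Finset (Fin m)} {x y : Fin m → ZMod 2} (hx : x ∈ deltaC M)
    (hy : y ∈ deltaC M) (h : ∀ i ∈ M, x i = y i) : x = y := by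
  funext i
  by_cases hi : i ∈ M
  · exact h i hi
  · rw [mem_deltaC.1 hx i hi, mem_deltaC.1 hy i hi]

theorem cwL_piecewise {M : Finset (Fin m)} {Ds : Finset ((Fin m → ZMod 2) × (Fin m → ZMod 2))}
    (hDs : ∀ d ∈ Ds, d.1 ∈ deltaC M) (v : (Fin m → ZMod 2) × (Fin m → ZMod 2)) :
    cwL Ds (M.piecewise v.1 0, M.piecewise v.2 0) = cwL Ds v := by
  funext d
  simp only [cwL, dotp_piecewise (hDs _ d.2)]

theorem injOn_cwL {M : Finset (Fin m)} {Ds : Finset ((Fin m → ZMod 2) × (Fin m → ZMod 2))}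
    (hDs : ∀ i ∈ M, ∃ t₂, (Pi.single i 1, t₂) ∈ Ds) :
    Set.InjOn (cwL Ds) (deltaC M ×ˢ deltaC M : Finset _) := by
  rintro ⟨α, β⟩ hv ⟨α', β'⟩ hv' heq
  simp only [coe_product, Set.mem_prod, mem_coe] at hv hv'
  have hagree (i) (hi : i ∈ M) : α i = α' i ∧ β i = β' i := by
    obtain ⟨t₂, hd⟩ := hDs i hi
    simpa [cwL, dotp_eq_dotProduct, dotProduct_single] using congrFun heq ⟨_, hd⟩
  exact Prod.ext (eq_of_mem_deltaC hv.1 hv'.1 fun i hi => (hagree i hi).1)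
    (eq_of_mem_deltaC hv.2 hv'.2 fun i hi => (hagree i hi).2)

theorem card_image_cwL {M : Finset (Fin m)} {B : Finset (Fin m → ZMod 2)} (hB : B.Nonempty) :
    #(univ.image (cwL (deltaC M ×ˢ B))) = 2 ^ (2 * #M) := by
  have himage : univ.image (cwL (deltaC M ×ˢ B)) =
      (deltaC M ×ˢ deltaC M).image (cwL (deltaC M ×ˢ B)) := by
    refine (image_subset_image (subset_univ _)).antisymm' fun c hc => ?_
    obtain ⟨v, -, rfl⟩ := mem_image.1 hc
    exact mem_image.2 ⟨_, mem_product.2 ⟨piecewise_mem_deltaC _ _, piecewise_mem_deltaC _ _⟩,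
      cwL_piecewise (fun d hd => (mem_product.1 hd).1) v⟩
  obtain ⟨t₂, ht₂⟩ := hB
  rw [himage, card_image_of_injOn (injOn_cwL fun i hi =>
      ⟨t₂, mem_product.2 ⟨single_mem_deltaC hi, ht₂⟩⟩),
    card_product, card_deltaC, two_mul, pow_add]

theorem map_univ_card_filter_dotp_ne_zero (M : Finset (Fin m)) :
    (univ : Finset (Fin m → ZMod 2)).val.map (fun γ => #{t ∈ deltaC M | dotp γ t ≠ 0}) =
      Multiset.replicate (2 ^ (m - #M)) 0 +
        Multiset.replicate (2 ^ m - 2 ^ (m - #M)) (2 ^ (#M - 1)) := by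
  rw [Multiset.map_univ_eq_replicate_add_replicate (deltaC Mᶜ)
    (fun _ => card_filter_dotp_ne_zero_of_mem_compl)
    (fun _ => card_filter_dotp_ne_zero_of_notMem_compl)]
  simp [card_compl, card_deltaC]

theorem map_univ_hammingNorm_gcwL {M : Finset (Fin m)} (hM : M.Nonempty)
    (B : Finset (Fin m → ZMod 2)) :
    (univ : Finset ((Fin m → ZMod 2) × (Fin m → ZMod 2))).val.map
        (fun v => hammingNorm (gcwL (deltaC M ×ˢ B) v)) =
      Multiset.replicate ((2 ^ m - 2 ^ (m - #M)) * (2 ^ m - 2 ^ (m - #M))) (2 ^ #M * #B) +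
      Multiset.replicate (2 * (2 ^ (m - #M) * (2 ^ m - 2 ^ (m - #M)))) (2 ^ (#M - 1) * #B) +
      Multiset.replicate (2 ^ (m - #M) * 2 ^ (m - #M)) 0 := by
  let W (γ : Fin m → ZMod 2) : ℕ := #{t ∈ deltaC M | dotp γ t ≠ 0}
  have hweight : (fun v => hammingNorm (gcwL (deltaC M ×ˢ B) v)) =
      fun v => #B * (W v.2 + W (v.1 + v.2)) :=
    funext (hammingNorm_gcwL_product _ _)
  rw [hweight, map_univ_shear fun x y => #B * (W y + W x), ← univ_product_univ, product_val]
  have hcomp : (fun v : (Fin m → ZMod 2) × (Fin m → ZMod 2) => #B * (W v.2 + W v.1)) =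
      (fun p : ℕ × ℕ => #B * (p.2 + p.1)) ∘ Prod.map W W := rfl
  rw [hcomp, ← Multiset.map_map, Multiset.map_prodMap_product, map_univ_card_filter_dotp_ne_zero,
    ← Nat.two_pow_pred_mul_two (card_pos.2 hM)]
  generalize 2 ^ (m - #M) = a
  generalize 2 ^ m - a = c
  generalize 2 ^ (#M - 1) = h
  simp only [Multiset.add_product, Multiset.product_add, Multiset.replicate_product_replicate,
    Multiset.map_add, Multiset.map_replicate]
  rw [show #B * (h + h) = h * 2 * #B by ring, mul_comm c a, two_mul, Multiset.replicate_add]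
  simp only [add_zero, zero_add, mul_zero, mul_comm #B h]
  abel

end

theorem stmt_2_general {m : ℕ} (M N : Finset (Fin m))
    (hM : M ≠ ∅) (hNu : N ≠ Finset.univ)
    (Ds : Finset ((Fin m → ZMod 2) × (Fin m → ZMod 2)))
    (hDs : Ds = deltaC M ×ˢ (deltaC N)ᶜ) :
    Ds.card = 2 ^ M.card * (2 ^ m - 2 ^ N.card) ∧
    ((Finset.univ : Finset ((Fin m → ZMod 2) × (Fin m → ZMod 2))).image (cwL Ds)).card = 2 ^ (2 * M.card) ∧
    (Finset.univ : Finset ((Fin m → ZMod 2) × (Fin m → ZMod 2))).val.map (fun v => hammingNorm (gcwL Ds v)) =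
      Multiset.replicate (2 ^ (2 * m) + 2 ^ (2 * m - 2 * M.card) - 2 ^ (2 * m - M.card + 1))
          (2 ^ M.card * (2 ^ m - 2 ^ N.card)) +
      Multiset.replicate (2 ^ (2 * m - M.card + 1) - 2 ^ (2 * m - 2 * M.card + 1))
          (2 ^ (M.card - 1) * (2 ^ m - 2 ^ N.card)) +
      Multiset.replicate (2 ^ (2 * m - 2 * M.card))
          (0) := by
  subst hDs
  have hcard_compl : #(deltaC N)ᶜ = 2 ^ m - 2 ^ #N := by simp [card_compl, card_deltaC]
  obtain ⟨hmul₁, hmul₂, hmul₃⟩ :=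
    two_pow_multiplicity_identities (by simpa using card_le_univ M : #M ≤ m)
  refine ⟨by rw [card_product, card_deltaC, hcard_compl],
    card_image_cwL (compl_deltaC_nonempty hNu), ?_⟩
  rw [map_univ_hammingNorm_gcwL (nonempty_iff_ne_empty.2 hM), hcard_compl, hmul₁, hmul₂, hmul₃]

theorem stmt_2 {m : ℕ} (hm : 1 ≤ m) (M N : Finset (Fin m))
    (hM : M ≠ ∅) (hNu : N ≠ Finset.univ)
    (Ds : Finset ((Fin m → ZMod 2) × (Fin m → ZMod 2)))
    (hDs : Ds = deltaC M ×ˢ (deltaC N)ᶜ) :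
    Ds.card = 2 ^ M.card * (2 ^ m - 2 ^ N.card) ∧
    ((Finset.univ : Finset ((Fin m → ZMod 2) × (Fin m → ZMod 2))).image (cwL Ds)).card = 2 ^ (2 * M.card) ∧
    (Finset.univ : Finset ((Fin m → ZMod 2) × (Fin m → ZMod 2))).val.map (fun v => hammingNorm (gcwL Ds v)) =
      Multiset.replicate (2 ^ (2 * m) + 2 ^ (2 * m - 2 * M.card) - 2 ^ (2 * m - M.card + 1))
          (2 ^ M.card * (2 ^ m - 2 ^ N.card)) +
      Multiset.replicate (2 ^ (2 * m - M.card + 1) - 2 ^ (2 * m - 2 * M.card + 1))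
          (2 ^ (M.card - 1) * (2 ^ m - 2 ^ N.card)) +
      Multiset.replicate (2 ^ (2 * m - 2 * M.card))
          (0) :=
  stmt_2_general M N hM hNu Ds hDs
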